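/- Let n ≥ 3 and 1 ≤ l < k ≤ n−2 be integers, and let λ ∈ ℝ^{n−1} satisfy σ_m(λ) > 0 for all 1 ≤ m ≤ k. Let a_0, …, a_{l−1} and b_l, …, b_k be nonnegative real numbers such that Σ_{i=0}^{l−1} a_i H_i(λ) = Σ_{j=l}^{k} b_j H_j(λ) > 0. Then for every p ∈ {1, …, n−1}, Σ_{j=l}^{k} j b_j H_{j−1}(Λ_p) > Σ_{i=0}^{l−1} i a_i H_{i−1}(Λ_p). -/
import Mathlib


/-- The `k`-th elementary symmetric polynomial of `x ∈ ℝ^m`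
(`σ_0 = 1`, `σ_k = 0` for `k > m`). -/
noncomputable def esymmR (m : ℕ) (x : Fin m → ℝ) (k : ℕ) : ℝ :=
  ∑ s ∈ Finset.powersetCard k (Finset.univ : Finset (Fin m)), ∏ i ∈ s, x i

/-- The normalized `k`-th elementary symmetric function `H_k = σ_k / C(m,k)`
(`H_0 = 1`, `H_k = 0` for `k > m`). -/
noncomputable def Hnorm (m : ℕ) (x : Fin m → ℝ) (k : ℕ) : ℝ :=
  esymmR m x k / (m.choose k : ℝ)

/-- The point of `ℝ^{m-1}` obtained from `x ∈ ℝ^m` by deleting the `p`-th coordinate. -/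
def deleteCoord {m : ℕ} (x : Fin m → ℝ) (p : Fin m) : Fin (m - 1) → ℝ :=
  fun i => if (i : ℕ) < (p : ℕ) then x ⟨(i : ℕ), by have := i.isLt; omega⟩
           else x ⟨(i : ℕ) + 1, by have := i.isLt; omega⟩

open Polynomial in
private lemma rr_derivative {p : ℝ[X]} (h : Multiset.card p.roots = p.natDegree) :
    Multiset.card (derivative p).roots = (derivative p).natDegree ∧
      (derivative p).natDegree = p.natDegree - 1 := by
  by_cases h0 : p.natDegree = 0
  · have hd : derivative p = 0 := by
      rw [derivative_of_natDegree_zero h0]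
    simp [hd, h0]
  · have hd0 : derivative p ≠ 0 := fun hh => h0 (natDegree_eq_zero_of_derivative_eq_zero hh)
    have c1 := p.card_roots_le_derivative
    have c2 := (derivative p).card_roots'
    have c3 := p.natDegree_derivative_le
    omega

open Polynomial in
private lemma rr_iterate (p : ℝ[X]) (h : Multiset.card p.roots = p.natDegree) (j : ℕ) :
    Multiset.card ((derivative^[j]) p).roots = ((derivative^[j]) p).natDegree ∧
    ((derivative^[j]) p).natDegree = p.natDegree - j := by
  induction j with
  | zero => simpa using h
  | succ i ih =>
    rw [Function.iterate_succ_apply']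
    obtain ⟨h1, h2⟩ := rr_derivative ih.1
    exact ⟨h1, by rw [h2, ih.2]; omega⟩

private lemma esymm_cons (a : ℝ) (s : Multiset ℝ) (k : ℕ) :
    (a ::ₘ s).esymm (k + 1) = s.esymm (k + 1) + a * s.esymm k := by
  simp only [Multiset.esymm, Multiset.powersetCard_cons, Multiset.map_add, Multiset.sum_add,
    Multiset.map_map, Function.comp_def, Multiset.prod_cons]
  rw [← Multiset.sum_map_mul_left]

private lemma esymm_zero' (s : Multiset ℝ) : s.esymm 0 = 1 := by
  simp [Multiset.esymm]

private lemma esymm_of_card_lt {s : Multiset ℝ} {k : ℕ} (h : Multiset.card s < k) :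
    s.esymm k = 0 := by
  simp [Multiset.esymm, Multiset.powersetCard_eq_empty _ h]

private lemma esymm_top_sq (s : Multiset ℝ) : ∀ c : ℕ, Multiset.card s = c + 2 →
    2 * s.esymm (c + 2) * s.esymm c ≤ s.esymm (c + 1) ^ 2 := by
  induction s using Multiset.induction_on with
  | empty => intro c hc; simp at hc
  | cons a t ih =>
    intro c hc
    rw [Multiset.card_cons] at hc
    match c with
    | 0 =>
      obtain ⟨b, rfl⟩ := Multiset.card_eq_one.mp (by omega : Multiset.card t = 1)
      have hb1 : ({b} : Multiset ℝ).esymm 1 = b := by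
        have h := esymm_cons b 0 0
        rw [Multiset.cons_zero] at h
        rw [h, esymm_zero', esymm_of_card_lt (by simp : Multiset.card (0 : Multiset ℝ) < 1)]
        ring
      have hb2 : ({b} : Multiset ℝ).esymm 2 = 0 := esymm_of_card_lt (by simp)
      have h1 : (a ::ₘ {b}).esymm 1 = b + a := by
        have h := esymm_cons a {b} 0
        rw [h, hb1, esymm_zero']; ring
      have h2 : (a ::ₘ {b}).esymm 2 = a * b := by
        have h : (a ::ₘ {b}).esymm 2 = ({b} : Multiset ℝ).esymm 2 + a * ({b} : Multiset ℝ).esymm 1 :=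
          esymm_cons a {b} 1
        rw [h, hb1, hb2]; ring
      have h0 : (a ::ₘ {b}).esymm 0 = 1 := esymm_zero' _
      rw [show (0:ℕ) + 2 = 2 from rfl, show (0:ℕ) + 1 = 1 from rfl, h0, h1, h2]
      nlinarith [sq_nonneg (a - b)]
    | (c'+1) =>
      have ht : Multiset.card t = c' + 2 := by omega
      have IH := ih c' ht
      have hz : t.esymm (c' + 3) = 0 := esymm_of_card_lt (by omega)
      rw [show c' + 1 + 2 = (c' + 2) + 1 from rfl, esymm_cons,
          show c' + 1 + 1 = (c' + 1) + 1 from rfl, esymm_cons,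
          show c' + 1 = c' + 1 from rfl, esymm_cons, hz]
      nlinarith [sq_nonneg (t.esymm (c' + 2)), sq_nonneg a,
        mul_le_mul_of_nonneg_left IH (sq_nonneg a)]

section
open Polynomial
private lemma weak_newton_multiset (s : Multiset ℝ) (m : ℕ) (h : m + 2 ≤ Multiset.card s) :
    ((Multiset.card s : ℝ) - m) * (s.esymm m * s.esymm (m + 2)) ≤
      ((Multiset.card s : ℝ) - (m + 1)) * s.esymm (m + 1) ^ 2 := by
  obtain ⟨d, hd⟩ : ∃ d, Multiset.card s = m + 2 + d := ⟨_, (Nat.add_sub_cancel' h).symm⟩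
  set p : ℝ[X] := (s.map fun r => X + C r).prod with hp
  have hmon : ∀ f ∈ s.map fun r => X + C r, f.Monic := fun f hf => by
    obtain ⟨r, _, rfl⟩ := Multiset.mem_map.mp hf; exact monic_X_add_C r
  have hdeg : p.natDegree = Multiset.card s := by
    rw [hp, natDegree_multiset_prod_of_monic _ hmon, Multiset.map_map]
    simp [Function.comp_def, natDegree_X_add_C]
  have hroots : Multiset.card p.roots = p.natDegree := by
    have hps : p = ((s.map Neg.neg).map fun r => X - C r).prod := by
      rw [hp, Multiset.map_map]; congr 1
      exact Multiset.map_congr rfl fun r _ => by simp [sub_neg_eq_add]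
    rw [hdeg, hps, roots_multiset_prod_X_sub_C, Multiset.card_map]
  obtain ⟨hq1, hq2⟩ := rr_iterate p hroots d
  set q := derivative^[d] p with hqdef
  have hqdeg : q.natDegree = m + 2 := by rw [hq2, hdeg, hd]; omega
  have hcard : Multiset.card q.roots = m + 2 := by rw [hq1, hqdeg]
  have top := esymm_top_sq q.roots m hcard
  set L := q.leadingCoeff with hL
  set ρ := q.roots with hρ
  -- coefficients via roots
  have cr : ∀ j : ℕ, j ≤ m + 2 → q.coeff j = L * (-1)^(m+2-j) * ρ.esymm (m+2-j) := by
    intro j hj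
    have := Polynomial.coeff_eq_esymm_roots_of_card hq1 (k := j) (by omega)
    rwa [hqdeg] at this
  -- coefficients via derivative
  have cd : ∀ j : ℕ, q.coeff j = (((j+d).descFactorial d : ℕ) : ℝ) * p.coeff (j + d) := by
    intro j
    rw [hqdef, Polynomial.coeff_iterate_derivative, nsmul_eq_mul]
  have pc : ∀ j : ℕ, j ≤ 2 → p.coeff (j + d) = s.esymm (m + 2 - j) := by
    intro j hj
    rw [hp, Multiset.prod_X_add_C_coeff s (by omega)]
    congr 1; omega
  -- the three coefficient identities
  have eq0 : ((d.descFactorial d : ℕ) : ℝ) * s.esymm (m+2) = L * (-1)^(m+2) * ρ.esymm (m+2) := by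
    have h1 := cd 0; have h2 := pc 0 (by omega); have h3 := cr 0 (by omega)
    rw [show (0:ℕ) + d = d from by omega] at h1 h2
    rw [show m + 2 - 0 = m + 2 from rfl] at h2 h3
    rw [h2] at h1; rw [← h1, h3]
  have eq1 : (((1+d).descFactorial d : ℕ) : ℝ) * s.esymm (m+1) = L * (-1)^(m+1) * ρ.esymm (m+1) := by
    have h1 := cd 1; have h2 := pc 1 (by omega); have h3 := cr 1 (by omega)
    rw [show m + 2 - 1 = m + 1 from rfl] at h2 h3
    rw [h2] at h1; rw [← h1, h3]
  have eq2 : (((2+d).descFactorial d : ℕ) : ℝ) * s.esymm m = L * (-1)^m * ρ.esymm m := by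
    have h1 := cd 2; have h2 := pc 2 (by omega); have h3 := cr 2 (by omega)
    rw [show m + 2 - 2 = m from by omega] at h2 h3
    rw [h2] at h1; rw [← h1, h3]
  set B := ((d.descFactorial d : ℕ) : ℝ) with hBdef
  set A := (((1+d).descFactorial d : ℕ) : ℝ) with hAdef
  set C2 := (((2+d).descFactorial d : ℕ) : ℝ) with hC2def
  have hu : ((-1:ℝ))^(m+2) * (-1)^m = 1 := by
    rw [← pow_add, show m+2+m = 2*(m+1) from by omega, pow_mul, neg_one_sq, one_pow]
  have hu1 : (((-1:ℝ))^(m+1))^2 = 1 := by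
    rw [← pow_mul, mul_comm, pow_mul, neg_one_sq, one_pow]
  have key : 2 * (B * s.esymm (m+2)) * (C2 * s.esymm m) ≤ (A * s.esymm (m+1))^2 := by
    rw [eq0, eq1, eq2]
    have lhs_eq : 2*(L*(-1)^(m+2)*ρ.esymm (m+2))*(L*(-1)^m*ρ.esymm m)
        = L^2*(2*ρ.esymm (m+2)*ρ.esymm m) := by
      linear_combination (2 * L^2 * ρ.esymm (m+2) * ρ.esymm m) * hu
    have rhs_eq : (L*(-1)^(m+1)*ρ.esymm (m+1))^2 = L^2*(ρ.esymm (m+1)^2) := by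
      linear_combination (L^2 * ρ.esymm (m+1)^2) * hu1
    rw [lhs_eq, rhs_eq]
    exact mul_le_mul_of_nonneg_left top (sq_nonneg L)
  -- descFactorial arithmetic
  have fB : d.descFactorial d = d.factorial := Nat.descFactorial_self d
  have fA : (1+d).descFactorial d = (d+1).factorial := by
    have h1 : (d+1).descFactorial (d+1) = (d+1).factorial := Nat.descFactorial_self (d+1)
    rw [Nat.descFactorial_succ, show d+1-d = 1 from by omega, one_mul] at h1
    rw [show 1+d = d+1 from by omega]; exact h1
  have fC : 2 * ((2+d).descFactorial d) = (d+2).factorial := by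
    have h1 : (d+2).descFactorial (d+2) = (d+2).factorial := Nat.descFactorial_self (d+2)
    rw [Nat.descFactorial_succ, Nat.descFactorial_succ,
        show d+2-(d+1) = 1 from by omega, show d+2-d = 2 from by omega, one_mul] at h1
    rw [show 2+d = d+2 from by omega]; exact h1
  have fKey : (d+1) * (2 * (d.descFactorial d) * ((2+d).descFactorial d))
      = (d+2) * ((1+d).descFactorial d)^2 := by
    rw [fA, fB]
    have : 2 * d.factorial * ((2+d).descFactorial d) = d.factorial * (2 * ((2+d).descFactorial d)) := by ring
    rw [this, fC, Nat.factorial_succ (d+1), Nat.factorial_succ d]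
    ring
  have fKeyR : ((d:ℝ)+1) * (2 * B * C2) = ((d:ℝ)+2) * A^2 := by
    have := congrArg (Nat.cast : ℕ → ℝ) fKey
    push_cast at this
    linarith [this]
  have hApos : (0:ℝ) < A := by
    have h0 : (1+d).descFactorial d ≠ 0 := by
      rw [Ne, Nat.descFactorial_eq_zero_iff_lt]; omega
    rw [hAdef]
    exact_mod_cast Nat.pos_of_ne_zero h0
  -- final
  have final : ((d:ℝ)+2) * (s.esymm m * s.esymm (m+2)) * A^2
      ≤ ((d:ℝ)+1) * s.esymm (m+1)^2 * A^2 := by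
    have st1 : ((d:ℝ)+2) * (s.esymm m * s.esymm (m+2)) * A^2
        = ((d:ℝ)+1) * (2 * (B * s.esymm (m+2)) * (C2 * s.esymm m)) := by
      linear_combination (-(s.esymm m * s.esymm (m+2))) * fKeyR
    rw [st1]
    calc ((d:ℝ)+1) * (2 * (B * s.esymm (m+2)) * (C2 * s.esymm m))
        ≤ ((d:ℝ)+1) * (A * s.esymm (m+1))^2 :=
          mul_le_mul_of_nonneg_left key (by positivity)
      _ = ((d:ℝ)+1) * s.esymm (m+1)^2 * A^2 := by ring
  have hcast : ((Multiset.card s : ℝ) - m) = (d:ℝ)+2 ∧ ((Multiset.card s : ℝ) - (m+1)) = (d:ℝ)+1 := by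
    constructor <;> (rw [hd]; push_cast; ring)
  rw [hcast.1, hcast.2]
  exact le_of_mul_le_mul_right final (by positivity)

end
private lemma esymmR_eq_esymm (M : ℕ) (x : Fin M → ℝ) (j : ℕ) :
    esymmR M x j = (Finset.univ.val.map x).esymm j := by
  rw [Finset.esymm_map_val]; rfl

private lemma esymmR_zero (M : ℕ) (x : Fin M → ℝ) : esymmR M x 0 = 1 := by
  simp [esymmR]

private lemma esymmR_of_lt {M j : ℕ} (x : Fin M → ℝ) (h : M < j) : esymmR M x j = 0 := by
  rw [esymmR, Finset.powersetCard_eq_empty.mpr (by simpa using h), Finset.sum_empty]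

private lemma weak_newton_R (M : ℕ) (x : Fin M → ℝ) (m : ℕ) (h : m + 2 ≤ M) :
    ((M:ℝ) - m) * (esymmR M x m * esymmR M x (m+2)) ≤ ((M:ℝ) - (m+1)) * esymmR M x (m+1)^2 := by
  have hc : Multiset.card (Finset.univ.val.map x) = M := by simp
  have := weak_newton_multiset (Finset.univ.val.map x) m (by omega)
  rw [hc] at this
  simpa only [← esymmR_eq_esymm] using this

private lemma deleteCoord_eq_succAbove {M : ℕ} (x : Fin (M+1) → ℝ) (p : Fin (M+1)) :
    deleteCoord x p = fun i : Fin M => x (p.succAbove i) := by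
  funext i
  simp only [deleteCoord, Fin.succAbove]
  by_cases h : (i : ℕ) < (p : ℕ)
  · rw [if_pos h, if_pos (by simpa [Fin.lt_def] using h)]
    congr 1
  · rw [if_neg h, if_neg (by simpa [Fin.lt_def] using h)]
    congr 1

private lemma univ_val_delete {M : ℕ} (x : Fin (M+1) → ℝ) (p : Fin (M+1)) :
    ((Finset.univ : Finset (Fin (M+1))).val.map x : Multiset ℝ)
      = x p ::ₘ ((Finset.univ : Finset (Fin M)).val.map (deleteCoord x p)) := by
  have hmem : p ∉ Finset.univ.map p.succAboveEmb := by
    simp only [Finset.mem_map, Finset.mem_univ, true_and, not_exists]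
    intro i
    exact Fin.succAbove_ne p i
  have huniv : insert p (Finset.univ.map p.succAboveEmb) = (Finset.univ : Finset (Fin (M+1))) := by
    apply Finset.eq_univ_iff_forall.mpr
    intro j
    rcases eq_or_ne j p with rfl | hj
    · exact Finset.mem_insert_self _ _
    · refine Finset.mem_insert_of_mem ?_
      obtain ⟨i, hi⟩ := Fin.exists_succAbove_eq hj
      exact Finset.mem_map.mpr ⟨i, Finset.mem_univ i, hi⟩
  have hval : (Finset.univ : Finset (Fin (M+1))).val
      = p ::ₘ ((Finset.univ : Finset (Fin M)).val.map p.succAbove) := by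
    rw [← huniv, Finset.insert_val, Multiset.ndinsert_of_notMem hmem, Finset.map_val]
    rfl
  rw [hval, Multiset.map_cons, Multiset.map_map, deleteCoord_eq_succAbove]
  rfl

private lemma esymmR_delete {M : ℕ} (x : Fin (M+1) → ℝ) (p : Fin (M+1)) (j : ℕ) :
    esymmR (M+1) x (j+1) =
      esymmR M (deleteCoord x p) (j+1) + x p * esymmR M (deleteCoord x p) j := by
  rw [esymmR_eq_esymm, esymmR_eq_esymm, esymmR_eq_esymm, univ_val_delete x p, esymm_cons]

private lemma choose_cast_pos {M j : ℕ} (h : j ≤ M) : (0:ℝ) < (M.choose j : ℝ) := by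
  exact_mod_cast Nat.choose_pos h

private lemma Hnorm_zero (M : ℕ) (x : Fin M → ℝ) : Hnorm M x 0 = 1 := by
  simp [Hnorm, esymmR_zero]

private lemma esymmR_eq_choose_mul {M j : ℕ} (x : Fin M → ℝ) :
    esymmR M x j = (M.choose j : ℝ) * Hnorm M x j ∨ M < j := by
  rcases le_or_gt j M with h | h
  · left; rw [Hnorm, mul_div_cancel₀ _ (ne_of_gt (choose_cast_pos h))]
  · right; exact h

private lemma esymmR_eq_choose_mul' {M j : ℕ} (x : Fin M → ℝ) (h : j ≤ M) :
    esymmR M x j = (M.choose j : ℝ) * Hnorm M x j := by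
  rw [Hnorm, mul_div_cancel₀ _ (ne_of_gt (choose_cast_pos h))]

private lemma Hnorm_pos_of {M j : ℕ} {x : Fin M → ℝ} (h : j ≤ M) (he : 0 < esymmR M x j) :
    0 < Hnorm M x j := div_pos he (choose_cast_pos h)

private lemma esymmR_pos_of {M j : ℕ} {x : Fin M → ℝ} (h : j ≤ M) (he : 0 < Hnorm M x j) :
    0 < esymmR M x j := by
  rw [esymmR_eq_choose_mul' x h]
  exact mul_pos (choose_cast_pos h) he

private lemma Hnorm_delete {M : ℕ} (x : Fin (M+1) → ℝ) (p : Fin (M+1)) {j : ℕ}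
    (h1 : 1 ≤ j) (h2 : j ≤ M) :
    ((M:ℝ)+1) * Hnorm (M+1) x j
      = ((M:ℝ)+1-j) * Hnorm M (deleteCoord x p) j
        + j * x p * Hnorm M (deleteCoord x p) (j-1) := by
  obtain ⟨i, rfl⟩ : ∃ i, j = i + 1 := ⟨j-1, by omega⟩
  have hE := esymmR_delete x p i
  have c1 : (0:ℝ) < ((M+1).choose (i+1) : ℝ) := choose_cast_pos (by omega)
  have c2 : (0:ℝ) < (M.choose (i+1) : ℝ) := choose_cast_pos (by omega)
  have c3 : (0:ℝ) < (M.choose i : ℝ) := choose_cast_pos (by omega)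
  have id2 : ((M:ℝ)+1) * (M.choose i : ℝ) = ((i:ℝ)+1) * ((M+1).choose (i+1) : ℝ) := by
    have h := Nat.add_one_mul_choose_eq M i
    have h' := congrArg (Nat.cast : ℕ → ℝ) h
    push_cast at h'
    linarith
  have idP : ((M+1).choose (i+1) : ℝ) = (M.choose i : ℝ) + (M.choose (i+1) : ℝ) := by
    have h := Nat.choose_succ_succ M i
    exact_mod_cast h
  have id1 : ((M:ℝ)+1) * (M.choose (i+1) : ℝ) = ((M:ℝ)-i) * ((M+1).choose (i+1) : ℝ) := by
    nlinarith [id2, idP]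
  have t1 : ((M:ℝ)+1) / ((M+1).choose (i+1) : ℝ) = ((M:ℝ)-i) / (M.choose (i+1) : ℝ) := by
    rw [div_eq_div_iff (ne_of_gt c1) (ne_of_gt c2)]
    linarith [id1]
  have t2 : ((M:ℝ)+1) / ((M+1).choose (i+1) : ℝ) = ((i:ℝ)+1) / (M.choose i : ℝ) := by
    rw [div_eq_div_iff (ne_of_gt c1) (ne_of_gt c3)]
    linarith [id2]
  have hj1 : (i + 1 : ℕ) - 1 = i := by omega
  rw [hj1]
  push_cast
  simp only [Hnorm]
  linear_combination (((M:ℝ)+1)/(((M+1).choose (i+1) : ℕ) : ℝ)) * hE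
    + (esymmR M (deleteCoord x p) (i+1)) * t1
    + (x p * esymmR M (deleteCoord x p) i) * t2

private lemma Hnorm_newton {M : ℕ} (x : Fin (M+1) → ℝ) {m : ℕ} (h1 : 1 ≤ m) (h2 : m ≤ M) :
    (m:ℝ) * (Hnorm (M+1) x (m-1) * Hnorm (M+1) x (m+1)) ≤ ((m:ℝ)+1) * Hnorm (M+1) x m ^ 2 := by
  obtain ⟨t, rfl⟩ : ∃ t, m = t + 1 := ⟨m-1, by omega⟩
  have WN := weak_newton_R (M+1) x t (by omega)
  have c0 : (0:ℝ) < ((M+1).choose t : ℝ) := choose_cast_pos (by omega)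
  have c1 : (0:ℝ) < ((M+1).choose (t+1) : ℝ) := choose_cast_pos (by omega)
  have c2 : (0:ℝ) < ((M+1).choose (t+2) : ℝ) := choose_cast_pos (by omega)
  have ca : ((M+1).choose (t+1) : ℝ) * ((t:ℝ)+1) = ((M+1).choose t : ℝ) * ((M:ℝ)+1-t) := by
    have h := Nat.choose_succ_right_eq (M+1) t
    have h' := congrArg (Nat.cast (R := ℝ)) h
    push_cast [Nat.cast_sub (by omega : t ≤ M+1)] at h'
    linarith
  have cb : ((M+1).choose (t+2) : ℝ) * ((t:ℝ)+2) = ((M+1).choose (t+1) : ℝ) * ((M:ℝ)-t) := by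
    have h : (M+1).choose (t+2) * (t+2) = (M+1).choose (t+1) * (M+1-(t+1)) :=
      Nat.choose_succ_right_eq (M+1) (t+1)
    have h' := congrArg (Nat.cast (R := ℝ)) h
    push_cast [Nat.cast_sub (by omega : t+1 ≤ M+1), Nat.cast_sub (by omega : t ≤ M)] at h'
    linarith
  rw [esymmR_eq_choose_mul' x (by omega : t ≤ M+1),
      esymmR_eq_choose_mul' x (by omega : t+1 ≤ M+1),
      esymmR_eq_choose_mul' x (by omega : t+2 ≤ M+1)] at WN
  set H0 := Hnorm (M+1) x t
  set H1 := Hnorm (M+1) x (t+1)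
  set H2 := Hnorm (M+1) x (t+2)
  have WN' : ((M:ℝ)+1-t) * ((((M+1).choose t : ℝ) * H0) * (((M+1).choose (t+2) : ℝ) * H2))
      ≤ ((M:ℝ)-t) * (((M+1).choose (t+1) : ℝ) * H1)^2 := by
    push_cast at WN
    nlinarith [WN]
  have hMt : (0:ℝ) < (M:ℝ) - t := by
    have : (t:ℝ) + 1 ≤ (M:ℝ) := by exact_mod_cast h2
    linarith
  have key : ((t:ℝ)+1)*(H0*H2) * (((t:ℝ)+1)*((M:ℝ)-t)*((M+1).choose (t+1) : ℝ)^2)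
      ≤ ((t:ℝ)+2)*H1^2 * (((t:ℝ)+1)*((M:ℝ)-t)*((M+1).choose (t+1) : ℝ)^2) := by
    calc ((t:ℝ)+1)*(H0*H2) * (((t:ℝ)+1)*((M:ℝ)-t)*((M+1).choose (t+1) : ℝ)^2)
        = ((t:ℝ)+1)*((t:ℝ)+2) * (((M:ℝ)+1-t)*((((M+1).choose t : ℝ) * H0) * (((M+1).choose (t+2) : ℝ) * H2))) := by
          linear_combination (H0*H2*((t:ℝ)+1)*((M:ℝ)-t)*((M+1).choose (t+1) : ℝ)) * ca
            - (H0*H2*((t:ℝ)+1)*((M:ℝ)+1-t)*((M+1).choose t : ℝ)) * cb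
      _ ≤ ((t:ℝ)+1)*((t:ℝ)+2) * (((M:ℝ)-t) * (((M+1).choose (t+1) : ℝ) * H1)^2) :=
          mul_le_mul_of_nonneg_left WN' (by positivity)
      _ = ((t:ℝ)+2)*H1^2 * (((t:ℝ)+1)*((M:ℝ)-t)*((M+1).choose (t+1) : ℝ)^2) := by ring
  have hfin := le_of_mul_le_mul_right key (by positivity)
  have hidx : (t + 1 : ℕ) - 1 = t := by omega
  rw [hidx]
  push_cast
  linarith [hfin]

private lemma garding_delete {M : ℕ} (x : Fin (M+2) → ℝ) (p : Fin (M+2)) {k : ℕ}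
    (hk : k ≤ M+1) (hx : ∀ j, 1 ≤ j → j ≤ k → 0 < Hnorm (M+2) x j) :
    ∀ j, j + 1 ≤ k → 0 < Hnorm (M+1) (deleteCoord x p) j := by
  intro j
  induction j with
  | zero => intro _; rw [Hnorm_zero]; norm_num
  | succ j IH =>
    intro hj2
    have IHpos : 0 < Hnorm (M+1) (deleteCoord x p) j := IH (by omega)
    by_contra hc
    push_neg at hc
    have P1 : 0 < Hnorm (M+2) x (j+1) := hx (j+1) (by omega) (by omega)
    have P2 : 0 < Hnorm (M+2) x (j+2) := hx (j+2) (by omega) (by omega)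
    have d1 := Hnorm_delete (M := M+1) x p (j := j+1) (by omega) (by omega)
    have d2 := Hnorm_delete (M := M+1) x p (j := j+2) (by omega) (by omega)
    have wn := Hnorm_newton (M := M) (deleteCoord x p) (m := j+1) (by omega) (by omega)
    rw [show (j+1:ℕ)-1 = j from by omega] at d1 wn
    rw [show (j+2:ℕ)-1 = j+1 from by omega] at d2
    set y := deleteCoord x p
    set Hj := Hnorm (M+1) y j
    set H1 := Hnorm (M+1) y (j+1)
    set H2 := Hnorm (M+1) y (j+2)
    push_cast at d1 d2 wn
    -- basic bounds
    have hMj : (0:ℝ) < (M:ℝ) - j := by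
      have : (j:ℝ) + 2 ≤ (M:ℝ) + 1 := by exact_mod_cast hj2.trans hk
      linarith
    have A1 : ((M:ℝ)+1-j)*(-H1) < ((j:ℝ)+1)*(x p)*Hj := by nlinarith [d1, P1]
    have A2 : ((j:ℝ)+2)*(x p)*(-H1) < ((M:ℝ)-j)*H2 := by nlinarith [d2, P2]
    have hxp : 0 < x p := by
      by_contra hxc
      push_neg at hxc
      nlinarith [A1, IHpos, mul_nonneg (by linarith : (0:ℝ) ≤ (M:ℝ)+1-j) (by linarith : 0 ≤ -H1),
        mul_nonneg (neg_nonneg.mpr hxc) IHpos.le]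
    have hy2 : 0 < H2 := by
      nlinarith [A2, mul_nonneg (mul_nonneg (by positivity : (0:ℝ) ≤ (j:ℝ)+2) hxp.le)
        (by linarith : 0 ≤ -H1)]
    have B1 : (((M:ℝ)+1-j)*(-H1)) * (((j:ℝ)+2)*(x p)*(-H1))
        < (((j:ℝ)+1)*(x p)*Hj) * (((M:ℝ)-j)*H2) := by
      apply mul_lt_mul'' A1 A2
      · exact mul_nonneg (by linarith) (by linarith)
      · exact mul_nonneg (mul_nonneg (by positivity) hxp.le) (by linarith)
    have hMx : (0:ℝ) < ((M:ℝ)-j) * x p := mul_pos hMj hxp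
    nlinarith [B1, wn, hMx, mul_nonneg hxp.le (sq_nonneg H1),
      mul_le_mul_of_nonneg_left wn hMx.le]

/-- If `σ_m(λ) > 0` for `1 ≤ m ≤ k`, `1 ≤ l < k ≤ n-2`, and nonnegative constants satisfy
`Σ_{i=0}^{l-1} a_i H_i = Σ_{j=l}^{k} b_j H_j > 0`, then for every `p`,
`Σ_{j=l}^{k} j b_j H_{j-1}(Λ_p) > Σ_{i=0}^{l-1} i a_i H_{i-1}(Λ_p)`. -/
theorem stmt_7 (n : ℕ) (hn : 3 ≤ n) (l k : ℕ) (hl : 1 ≤ l) (hlk : l < k) (hk : k ≤ n - 2)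
    (lam : Fin (n - 1) → ℝ)
    (hσ : ∀ m : ℕ, 1 ≤ m → m ≤ k → 0 < esymmR (n - 1) lam m)
    (a b : ℕ → ℝ)
    (ha : ∀ i ∈ Finset.range l, 0 ≤ a i)
    (hb : ∀ j ∈ Finset.Icc l k, 0 ≤ b j)
    (heq : ∑ i ∈ Finset.range l, a i * Hnorm (n - 1) lam i =
           ∑ j ∈ Finset.Icc l k, b j * Hnorm (n - 1) lam j)
    (hpos : 0 < ∑ j ∈ Finset.Icc l k, b j * Hnorm (n - 1) lam j) :
    ∀ p : Fin (n - 1),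
      ∑ i ∈ Finset.range l, (i : ℝ) * a i * Hnorm (n - 2) (deleteCoord lam p) (i - 1) <
        ∑ j ∈ Finset.Icc l k, (j : ℝ) * b j * Hnorm (n - 2) (deleteCoord lam p) (j - 1) := by
  obtain ⟨M, rfl⟩ : ∃ M, n = M + 3 := ⟨n - 3, by omega⟩
  intro p
  have hkM : k ≤ M + 1 := by omega
  have hHx : ∀ j, 1 ≤ j → j ≤ k → 0 < Hnorm (M+2) lam j := fun j h1 h2 =>
    Hnorm_pos_of (by omega) (hσ j h1 h2)
  have hHy : ∀ j, j + 1 ≤ k → 0 < Hnorm (M+1) (deleteCoord lam p) j :=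
    garding_delete lam p hkM hHx
  have heq' : ∑ i ∈ Finset.range l, a i * Hnorm (M+2) lam i =
      ∑ j ∈ Finset.Icc l k, b j * Hnorm (M+2) lam j := heq
  have hpos' : 0 < ∑ j ∈ Finset.Icc l k, b j * Hnorm (M+2) lam j := hpos
  set y : Fin (M+1) → ℝ := deleteCoord lam p with hydef
  -- the ratio
  set r : ℕ → ℝ := fun m => (m:ℝ) * Hnorm (M+1) y (m-1) / Hnorm (M+2) lam m with hrdef
  have hHynn : ∀ m, m ≤ k → 0 ≤ Hnorm (M+1) y (m-1) := by
    intro m hm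
    rcases Nat.eq_zero_or_pos m with rfl | hm1
    · rw [show (0:ℕ)-1 = 0 from rfl, Hnorm_zero]; norm_num
    · exact (hHy (m-1) (by omega)).le
  have hrnn : ∀ m, m ≤ k → 0 ≤ r m := by
    intro m hm
    rcases Nat.eq_zero_or_pos m with rfl | hm1
    · simp [hrdef]
    · exact div_nonneg (mul_nonneg (by positivity) (hHynn m hm)) (hHx m hm1 hm).le
  -- monotonicity step
  have mono : ∀ m, 1 ≤ m → m + 1 ≤ k → r m ≤ r (m+1) := by
    intro m h1 h2
    have hx1 : 0 < Hnorm (M+2) lam m := hHx m h1 (by omega)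
    have hx2 : 0 < Hnorm (M+2) lam (m+1) := hHx (m+1) (by omega) h2
    have hym : 0 ≤ Hnorm (M+1) y (m-1) := hHynn m (by omega)
    have d1 := Hnorm_delete (M := M+1) lam p (j := m) h1 (by omega)
    have d2 := Hnorm_delete (M := M+1) lam p (j := m+1) (by omega) (by omega)
    have wn := Hnorm_newton (M := M) y (m := m) h1 (by omega)
    rw [show (m+1:ℕ)-1 = m from by omega] at d2
    push_cast at d1 d2 wn
    have hMm : (0:ℝ) ≤ (M:ℝ)+1-m := by
      have : (m:ℝ) ≤ (M:ℝ)+1 := by exact_mod_cast (by omega : m ≤ M+1)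
      linarith
    have E1 : ((M:ℝ)+2) * ((m:ℝ)*Hnorm (M+1) y (m-1)*Hnorm (M+2) lam (m+1))
        = (m:ℝ)*Hnorm (M+1) y (m-1) *
          (((M:ℝ)+1-m)*Hnorm (M+1) y (m+1) + ((m:ℝ)+1)*lam p*Hnorm (M+1) y m) := by
      linear_combination ((m:ℝ)*Hnorm (M+1) y (m-1)) * d2
    have E2 : ((M:ℝ)+2) * (((m:ℝ)+1)*Hnorm (M+1) y m*Hnorm (M+2) lam m)
        = ((m:ℝ)+1)*Hnorm (M+1) y m *
          (((M:ℝ)+2-m)*Hnorm (M+1) y m + (m:ℝ)*lam p*Hnorm (M+1) y (m-1)) := by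
      linear_combination (((m:ℝ)+1)*Hnorm (M+1) y m) * d1
    have key : ((M:ℝ)+2) * ((m:ℝ)*Hnorm (M+1) y (m-1)*Hnorm (M+2) lam (m+1))
        ≤ ((M:ℝ)+2) * (((m:ℝ)+1)*Hnorm (M+1) y m*Hnorm (M+2) lam m) := by
      rw [E1, E2]
      nlinarith [mul_le_mul_of_nonneg_left wn hMm, sq_nonneg (Hnorm (M+1) y m)]
    have key2 := le_of_mul_le_mul_left key (by positivity : (0:ℝ) < (M:ℝ)+2)
    simp only [hrdef]
    rw [show (m+1:ℕ)-1 = m from by omega, div_le_div_iff₀ hx1 hx2]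
    push_cast
    linarith [key2]
  -- chain
  have chain : ∀ u v : ℕ, 1 ≤ u → u ≤ v → v ≤ k → r u ≤ r v := by
    intro u v hu1 huv hvk
    induction v, huv using Nat.le_induction with
    | base => exact le_refl _
    | succ v hv IH =>
      exact le_trans (IH (by omega)) (mono v (by omega) (by omega))
  -- strict step at l
  have hstrict : r (l-1) < r l := by
    rcases eq_or_lt_of_le hl with rfl | hl2
    · -- l = 1
      have hr0 : r 0 = 0 := by simp [hrdef]
      have hr1 : 0 < r 1 := by
        simp only [hrdef]
        have h10 : (1:ℕ) - 1 = 0 := rfl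
        rw [h10, Hnorm_zero]
        have := hHx 1 le_rfl (by omega)
        positivity
      rw [show (1:ℕ)-1 = 0 from rfl, hr0]
      exact hr1
    · -- l ≥ 2
      obtain ⟨m, rfl⟩ : ∃ m, l = m + 1 := ⟨l-1, by omega⟩
      have h1 : 1 ≤ m := by omega
      have h2 : m + 1 ≤ k := by omega
      have hx1 : 0 < Hnorm (M+2) lam m := hHx m h1 (by omega)
      have hx2 : 0 < Hnorm (M+2) lam (m+1) := hHx (m+1) (by omega) h2
      have hym : 0 ≤ Hnorm (M+1) y (m-1) := hHynn m (by omega)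
      have hymp : 0 < Hnorm (M+1) y m := hHy m (by omega)
      have d1 := Hnorm_delete (M := M+1) lam p (j := m) h1 (by omega)
      have d2 := Hnorm_delete (M := M+1) lam p (j := m+1) (by omega) (by omega)
      have wn := Hnorm_newton (M := M) y (m := m) h1 (by omega)
      rw [show (m+1:ℕ)-1 = m from by omega] at d2
      push_cast at d1 d2 wn
      have hMm : (0:ℝ) ≤ (M:ℝ)+1-m := by
        have : (m:ℝ) ≤ (M:ℝ)+1 := by exact_mod_cast (by omega : m ≤ M+1)
        linarith
      have E1 : ((M:ℝ)+2) * ((m:ℝ)*Hnorm (M+1) y (m-1)*Hnorm (M+2) lam (m+1))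
          = (m:ℝ)*Hnorm (M+1) y (m-1) *
            (((M:ℝ)+1-m)*Hnorm (M+1) y (m+1) + ((m:ℝ)+1)*lam p*Hnorm (M+1) y m) := by
        linear_combination ((m:ℝ)*Hnorm (M+1) y (m-1)) * d2
      have E2 : ((M:ℝ)+2) * (((m:ℝ)+1)*Hnorm (M+1) y m*Hnorm (M+2) lam m)
          = ((m:ℝ)+1)*Hnorm (M+1) y m *
            (((M:ℝ)+2-m)*Hnorm (M+1) y m + (m:ℝ)*lam p*Hnorm (M+1) y (m-1)) := by
        linear_combination (((m:ℝ)+1)*Hnorm (M+1) y m) * d1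
      have key : ((M:ℝ)+2) * ((m:ℝ)*Hnorm (M+1) y (m-1)*Hnorm (M+2) lam (m+1))
          < ((M:ℝ)+2) * (((m:ℝ)+1)*Hnorm (M+1) y m*Hnorm (M+2) lam m) := by
        rw [E1, E2]
        nlinarith [mul_le_mul_of_nonneg_left wn hMm, mul_pos hymp hymp]
      have key2 := lt_of_mul_lt_mul_left key (by positivity : (0:ℝ) ≤ (M:ℝ)+2)
      simp only [hrdef]
      rw [show (m+1:ℕ)-1 = m from by omega, div_lt_div_iff₀ hx1 hx2]
      push_cast
      linarith [key2]
  -- per-term bounds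
  have hterm_eq : ∀ m, 1 ≤ m → m ≤ k →
      (m:ℝ) * Hnorm (M+1) y (m-1) = r m * Hnorm (M+2) lam m := by
    intro m h1 h2
    simp only [hrdef]
    rw [div_mul_cancel₀ _ (ne_of_gt (hHx m h1 h2))]
  have hLb : ∑ i ∈ Finset.range l, (i:ℝ) * a i * Hnorm (M+1) y (i-1)
      ≤ r (l-1) * ∑ i ∈ Finset.range l, a i * Hnorm (M+2) lam i := by
    rw [Finset.mul_sum]
    apply Finset.sum_le_sum
    intro i hi
    rw [Finset.mem_range] at hi
    rcases Nat.eq_zero_or_pos i with rfl | hi1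
    · simp only [Nat.cast_zero, zero_mul]
      have h0 : Hnorm (M+2) lam 0 = 1 := Hnorm_zero _ _
      rw [h0]
      have := hrnn (l-1) (by omega)
      have := ha 0 (Finset.mem_range.mpr (by omega))
      nlinarith
    · have hix : 0 < Hnorm (M+2) lam i := hHx i hi1 (by omega)
      have hai := ha i (Finset.mem_range.mpr hi)
      have hri : r i ≤ r (l-1) := by
        rcases eq_or_lt_of_le (by omega : i ≤ l - 1) with rfl | hlt
        · exact le_refl _
        · exact chain i (l-1) hi1 (by omega) (by omega)
      calc (i:ℝ) * a i * Hnorm (M+1) y (i-1)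
          = a i * ((i:ℝ) * Hnorm (M+1) y (i-1)) := by ring
        _ = a i * (r i * Hnorm (M+2) lam i) := by rw [hterm_eq i hi1 (by omega)]
        _ ≤ a i * (r (l-1) * Hnorm (M+2) lam i) := by
            apply mul_le_mul_of_nonneg_left _ hai
            exact mul_le_mul_of_nonneg_right hri hix.le
        _ = r (l-1) * (a i * Hnorm (M+2) lam i) := by ring
  have hRb : r l * ∑ j ∈ Finset.Icc l k, b j * Hnorm (M+2) lam j
      ≤ ∑ j ∈ Finset.Icc l k, (j:ℝ) * b j * Hnorm (M+1) y (j-1) := by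
    rw [Finset.mul_sum]
    apply Finset.sum_le_sum
    intro j hj
    rw [Finset.mem_Icc] at hj
    have hjx : 0 < Hnorm (M+2) lam j := hHx j (by omega) hj.2
    have hbj := hb j (Finset.mem_Icc.mpr hj)
    have hrj : r l ≤ r j := chain l j hl hj.1 hj.2
    calc r l * (b j * Hnorm (M+2) lam j)
        = b j * (r l * Hnorm (M+2) lam j) := by ring
      _ ≤ b j * (r j * Hnorm (M+2) lam j) := by
          apply mul_le_mul_of_nonneg_left _ hbj
          exact mul_le_mul_of_nonneg_right hrj hjx.le
      _ = b j * ((j:ℝ) * Hnorm (M+1) y (j-1)) := by rw [hterm_eq j (by omega) hj.2]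
      _ = (j:ℝ) * b j * Hnorm (M+1) y (j-1) := by ring
  have hmid : r (l-1) * (∑ j ∈ Finset.Icc l k, b j * Hnorm (M+2) lam j)
      < r l * (∑ j ∈ Finset.Icc l k, b j * Hnorm (M+2) lam j) :=
    mul_lt_mul_of_pos_right hstrict hpos'
  calc ∑ i ∈ Finset.range l, (i:ℝ) * a i * Hnorm (M+1) y (i-1)
      ≤ r (l-1) * ∑ i ∈ Finset.range l, a i * Hnorm (M+2) lam i := hLb
    _ = r (l-1) * ∑ j ∈ Finset.Icc l k, b j * Hnorm (M+2) lam j := by rw [heq']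
    _ < r l * ∑ j ∈ Finset.Icc l k, b j * Hnorm (M+2) lam j := hmid
    _ ≤ ∑ j ∈ Finset.Icc l k, (j:ℝ) * b j * Hnorm (M+1) y (j-1) := hRb
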